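/- Let t > 0 and let (h_k)_{k≥1} be an orthonormal basis of L²([0,t]), with c_k(s) = ∫_0^s h_k(τ) dτ. Then for all s, s' ∈ [0,t], Σ_{k=1}^∞ c_k(s) c_k(s') = min(s, s'). Consequently, if (ξ_k)_{k≥1} are independent standard Gaussian random variables and S(s) denotes the L² sum Σ_{k=1}^∞ ξ_k c_k(s), then E[S(s)S(s')] = min(s,s'), i.e., S has the covariance function of standard Brownian motion. -/

import Mathlib

/-!
Since `c k s = ⟪χ_[0,s], h k⟫` in `L²([0,t])`, Parseval's identity for the Hilbert basis `h` gives
`∑ c k s * c k s' = ⟪χ_[0,s], χ_[0,s']⟫ = min s s'`. Independent standard Gaussians form an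
orthonormal family in `L²(P)`, so the `n`-th partial sums of `S s` and `S s'` have inner product
`∑_{k<n} c k s * c k s'`; by continuity of the inner product this tends to `E[S s * S s']`.
-/

open MeasureTheory ProbabilityTheory Filter Finset Topology

namespace MeasureTheory

variable {α : Type*} [MeasurableSpace α] {μ : Measure α}

lemma MemLp.inner_toLp_toLp {f g : α → ℝ} (hf : MemLp f 2 μ) (hg : MemLp g 2 μ) :
    inner ℝ (hf.toLp f) (hg.toLp g) = ∫ x, f x * g x ∂μ := by
  rw [L2.inner_def]
  refine integral_congr_ae ?_
  filter_upwards [hf.coeFn_toLp, hg.coeFn_toLp] with x hfx hgx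
  rw [hfx, hgx, real_inner_eq_re_inner]
  simp [mul_comm]

lemma MemLp.norm_toLp_sq {f : α → ℝ} (hf : MemLp f 2 μ) :
    ‖hf.toLp f‖ ^ 2 = ∫ x, f x ^ 2 ∂μ := by
  rw [← real_inner_self_eq_norm_sq, hf.inner_toLp_toLp]
  simp only [sq]

lemma tendsto_toLp_of_tendsto_integral_sq_sub {ι : Type*} {l : Filter ι} {f : ι → α → ℝ}
    {g : α → ℝ} (hf : ∀ i, MemLp (f i) 2 μ) (hg : MemLp g 2 μ)
    (hfg : Tendsto (fun i => ∫ x, (f i x - g x) ^ 2 ∂μ) l (𝓝 0)) :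
    Tendsto (fun i => (hf i).toLp (f i)) l (𝓝 (hg.toLp g)) := by
  rw [tendsto_iff_norm_sub_tendsto_zero]
  have hnorm : ∀ i, ‖(hf i).toLp (f i) - hg.toLp g‖ = √(∫ x, (f i x - g x) ^ 2 ∂μ) := by
    intro i
    rw [← MemLp.toLp_sub, ← Real.sqrt_sq (norm_nonneg _), ((hf i).sub hg).norm_toLp_sq]
    rfl
  simpa only [hnorm, Real.sqrt_zero] using hfg.sqrt

lemma MemLp.sum_smul_toLp {ι : Type*} {ξ : ι → α → ℝ} (hξ : ∀ i, MemLp (ξ i) 2 μ) (a : ι → ℝ)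
    (s : Finset ι) :
    ∑ i ∈ s, a i • (hξ i).toLp (ξ i) =
      (memLp_finsetSum s fun i _ => (hξ i).mul_const (a i)).toLp
        (fun x => ∑ i ∈ s, ξ i x * a i) := by
  classical
  induction s using Finset.induction_on with
  | empty => simp only [sum_empty]; exact (MemLp.toLp_zero _).symm
  | insert j s hj ih =>
    rw [sum_insert hj, ih, ← MemLp.toLp_const_smul, ← MemLp.toLp_add]
    refine MemLp.toLp_congr _ _ (ae_of_all _ fun x => ?_)
    simp [sum_insert hj, mul_comm]

lemma tendsto_sum_smul_toLp {ξ : ℕ → α → ℝ} (hξ : ∀ k, MemLp (ξ k) 2 μ) (a : ℕ → ℝ)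
    {S : α → ℝ} (hS : MemLp S 2 μ)
    (hlim : Tendsto (fun n => ∫ x, (∑ k ∈ range n, ξ k x * a k - S x) ^ 2 ∂μ) atTop (𝓝 0)) :
    Tendsto (fun n => ∑ k ∈ range n, a k • (hξ k).toLp (ξ k)) atTop (𝓝 (hS.toLp S)) := by
  simpa only [MemLp.sum_smul_toLp] using tendsto_toLp_of_tendsto_integral_sq_sub _ hS hlim

end MeasureTheory

lemma Orthonormal.tendsto_sum_mul_of_tendsto_sum_smul {E : Type*} [NormedAddCommGroup E]
    [InnerProductSpace ℝ E] {v : ℕ → E} (hv : Orthonormal ℝ v) {a b : ℕ → ℝ} {x y : E}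
    (ha : Tendsto (fun n => ∑ k ∈ range n, a k • v k) atTop (𝓝 x))
    (hb : Tendsto (fun n => ∑ k ∈ range n, b k • v k) atTop (𝓝 y)) :
    Tendsto (fun n => ∑ k ∈ range n, a k * b k) atTop (𝓝 (inner ℝ x y)) := by
  simpa only [hv.inner_sum, conj_trivial] using ha.inner (𝕜 := ℝ) hb

namespace ProbabilityTheory

variable {Ω : Type*} [MeasurableSpace Ω] {P : Measure Ω}

lemma orthonormal_toLp_of_pairwise_indepFun {ι : Type*} {ξ : ι → Ω → ℝ}
    (hξ : ∀ i, MemLp (ξ i) 2 P)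
    (hindep : Pairwise fun i j => IndepFun (ξ i) (ξ j) P)
    (hmean : ∀ i, ∫ ω, ξ i ω ∂P = 0) (hsq : ∀ i, ∫ ω, ξ i ω ^ 2 ∂P = 1) :
    Orthonormal ℝ fun i => (hξ i).toLp (ξ i) := by
  classical
  rw [orthonormal_iff_ite]
  intro i j
  rw [MemLp.inner_toLp_toLp]
  split_ifs with hij
  · subst hij
    simpa only [sq] using hsq i
  · have := (hindep hij).integral_mul_eq_mul_integral (hξ i).aestronglyMeasurable
      (hξ j).aestronglyMeasurable
    simpa [hmean i] using this

lemma HasLaw.memLp_two_of_gaussianReal {X : Ω → ℝ} {m : ℝ} {v : NNReal}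
    (hX : HasLaw X (gaussianReal m v) P) : MemLp X 2 P := by
  have h := memLp_id_gaussianReal (μ := m) (v := v) 2
  rw [← hX.map_eq] at h
  exact (memLp_map_measure_iff aestronglyMeasurable_id hX.aemeasurable).1 h

lemma HasLaw.integral_eq_zero_of_gaussianReal {X : Ω → ℝ} {v : NNReal}
    (hX : HasLaw X (gaussianReal 0 v) P) : ∫ ω, X ω ∂P = 0 := by
  simpa using hX.integral_eq

lemma HasLaw.integral_sq_of_gaussianReal {X : Ω → ℝ} {v : NNReal}
    (hX : HasLaw X (gaussianReal 0 v) P) : ∫ ω, X ω ^ 2 ∂P = v := by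
  rw [← variance_of_integral_eq_zero hX.aemeasurable hX.integral_eq_zero_of_gaussianReal,
    hX.variance_eq, variance_id_gaussianReal]

end ProbabilityTheory

noncomputable def indicatorIccLp (t s : ℝ) : Lp ℝ 2 (volume.restrict (Set.Icc (0:ℝ) t)) :=
  indicatorConstLp 2 (measurableSet_Icc (a := 0) (b := s)) (by finiteness) 1

lemma inner_indicatorIccLp {t s : ℝ} (hs : s ∈ Set.Icc 0 t)
    (f : Lp ℝ 2 (volume.restrict (Set.Icc (0:ℝ) t))) :
    inner ℝ (indicatorIccLp t s) f = ∫ τ in 0..s, f τ := by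
  rw [indicatorIccLp, L2.inner_indicatorConstLp_one, Measure.restrict_restrict measurableSet_Icc,
    Set.inter_eq_left.mpr (Set.Icc_subset_Icc_right hs.2), intervalIntegral.integral_of_le hs.1,
    integral_Icc_eq_integral_Ioc]

lemma inner_indicatorIccLp_indicatorIccLp {t s s' : ℝ} (hs : s ∈ Set.Icc 0 t) (hs' : 0 ≤ s') :
    inner ℝ (indicatorIccLp t s) (indicatorIccLp t s') = min s s' := by
  rw [indicatorIccLp, indicatorIccLp, L2.real_inner_indicatorConstLp_one_indicatorConstLp_one,
    Set.Icc_inter_Icc, max_self, measureReal_restrict_apply measurableSet_Icc, Set.Icc_inter_Icc,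
    max_self, min_eq_left (min_le_left _ _ |>.trans hs.2),
    Real.volume_real_Icc_of_le (le_min hs.1 hs'), sub_zero]

lemma HilbertBasis.hasSum_intervalIntegral_mul_intervalIntegral {ι : Type*} {t : ℝ}
    (b : HilbertBasis ι ℝ (Lp ℝ 2 (volume.restrict (Set.Icc (0:ℝ) t)))) {s s' : ℝ}
    (hs : s ∈ Set.Icc 0 t) (hs' : s' ∈ Set.Icc 0 t) :
    HasSum (fun i => (∫ τ in 0..s, b i τ) * ∫ τ in 0..s', b i τ) (min s s') := by
  have h := b.hasSum_inner_mul_inner (indicatorIccLp t s) (indicatorIccLp t s')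
  have coeff : ∀ i, inner ℝ (indicatorIccLp t s) (b i) * inner ℝ (b i) (indicatorIccLp t s') =
      (∫ τ in 0..s, b i τ) * ∫ τ in 0..s', b i τ := fun i => by
    rw [real_inner_comm (indicatorIccLp t s'), inner_indicatorIccLp hs, inner_indicatorIccLp hs']
  simpa only [coeff, inner_indicatorIccLp_indicatorIccLp hs hs'.1] using h

theorem statement3_general
    (t : ℝ)
    (h : ℕ → Lp ℝ 2 (volume.restrict (Set.Icc (0:ℝ) t)))
    (horth : Orthonormal ℝ h)
    (hbasis : (Submodule.span ℝ (Set.range h)).topologicalClosure = ⊤)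
    (c : ℕ → ℝ → ℝ)
    (hc : ∀ k s, c k s = ∫ τ in (0:ℝ)..s, (h k : ℝ → ℝ) τ)
    {Ω : Type*} [MeasurableSpace Ω] (P : Measure Ω)
    (ξ : ℕ → Ω → ℝ)
    (hmeas : ∀ k, Measurable (ξ k))
    (hindep : iIndepFun ξ P)
    (hgauss : ∀ k, P.map (ξ k) = gaussianReal 0 1)
    (s : ℝ) (hs : s ∈ Set.Icc (0:ℝ) t) (s' : ℝ) (hs' : s' ∈ Set.Icc (0:ℝ) t)
    (Ss Ss' : Ω → ℝ) (hSs : MemLp Ss 2 P) (hSs' : MemLp Ss' 2 P)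
    (hSlim : Tendsto (fun n => ∫ ω, (∑ k ∈ Finset.range n, ξ k ω * c k s - Ss ω) ^ 2 ∂P)
      atTop (nhds 0))
    (hSlim' : Tendsto (fun n => ∫ ω, (∑ k ∈ Finset.range n, ξ k ω * c k s' - Ss' ω) ^ 2 ∂P)
      atTop (nhds 0)) :
    HasSum (fun k => c k s * c k s') (min s s') ∧
      ∫ ω, Ss ω * Ss' ω ∂P = min s s' := by
  have hsum : HasSum (fun k => c k s * c k s') (min s s') := by
    simpa only [HilbertBasis.coe_mk, hc] using
      (HilbertBasis.mk horth hbasis.ge).hasSum_intervalIntegral_mul_intervalIntegral hs hs'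
  refine ⟨hsum, ?_⟩
  have hlaw : ∀ k, HasLaw (ξ k) (gaussianReal 0 1) P :=
    fun k => ⟨(hmeas k).aemeasurable, hgauss k⟩
  have hL2 : ∀ k, MemLp (ξ k) 2 P := fun k => (hlaw k).memLp_two_of_gaussianReal
  have hξ : Orthonormal ℝ fun k => (hL2 k).toLp (ξ k) :=
    orthonormal_toLp_of_pairwise_indepFun hL2 (fun _ _ hij => hindep.indepFun hij)
      (fun k => (hlaw k).integral_eq_zero_of_gaussianReal)
      (fun k => by simpa using (hlaw k).integral_sq_of_gaussianReal)
  have hcov := hξ.tendsto_sum_mul_of_tendsto_sum_smul (tendsto_sum_smul_toLp hL2 _ hSs hSlim)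
    (tendsto_sum_smul_toLp hL2 _ hSs' hSlim')
  rw [MemLp.inner_toLp_toLp] at hcov
  exact tendsto_nhds_unique hcov hsum.tendsto_sum_nat

/-- If `(h k)` is an orthonormal basis of `L²([0,t])` and `c k s = ∫_0^s h k`, then for
`s, s' ∈ [0,t]` one has `∑_k c k s * c k s' = min s s'`.  Consequently, if `(ξ k)` are
independent standard Gaussians and `Ss`, `Ss'` are the mean-square limits of the partial
sums of `∑ ξ k * c k s` and `∑ ξ k * c k s'`, then `E[Ss * Ss'] = min s s'`, i.e. the
covariance function of standard Brownian motion. -/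
theorem statement3
    (t : ℝ) (ht : 0 < t)
    (h : ℕ → Lp ℝ 2 (volume.restrict (Set.Icc (0:ℝ) t)))
    (horth : Orthonormal ℝ h)
    (hbasis : (Submodule.span ℝ (Set.range h)).topologicalClosure = ⊤)
    (c : ℕ → ℝ → ℝ)
    (hc : ∀ k s, c k s = ∫ τ in (0:ℝ)..s, (h k : ℝ → ℝ) τ)
    {Ω : Type*} [MeasurableSpace Ω] (P : Measure Ω) [IsProbabilityMeasure P]
    (ξ : ℕ → Ω → ℝ)
    (hmeas : ∀ k, Measurable (ξ k))
    (hindep : iIndepFun ξ P)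
    (hgauss : ∀ k, P.map (ξ k) = gaussianReal 0 1)
    (s : ℝ) (hs : s ∈ Set.Icc (0:ℝ) t) (s' : ℝ) (hs' : s' ∈ Set.Icc (0:ℝ) t)
    (Ss Ss' : Ω → ℝ) (hSs : MemLp Ss 2 P) (hSs' : MemLp Ss' 2 P)
    (hSlim : Tendsto (fun n => ∫ ω, (∑ k ∈ Finset.range n, ξ k ω * c k s - Ss ω) ^ 2 ∂P)
      atTop (nhds 0))
    (hSlim' : Tendsto (fun n => ∫ ω, (∑ k ∈ Finset.range n, ξ k ω * c k s' - Ss' ω) ^ 2 ∂P)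
      atTop (nhds 0)) :
    HasSum (fun k => c k s * c k s') (min s s') ∧
      ∫ ω, Ss ω * Ss' ω ∂P = min s s' :=
  statement3_general t h horth hbasis c hc P ξ hmeas hindep hgauss s hs s' hs' Ss Ss' hSs hSs' hSlim
    hSlim'
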